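/- Assume q is a power of 2 and r ≥ 2. Then the matrix code of relations C_mat(A) of the canonical family A contains an F_{q^m}-linear subspace W of dimension ⌊(r−1)/2⌋ such that every matrix M ∈ W has rank at most 2. -/

import Mathlib

open Matrix

/-- Componentwise (Schur) product of two vectors. -/
def schur {F : Type*} [Field F] {n : ℕ} (a b : Fin n → F) : Fin n → F :=
  fun t => a t * b t

/-- The matrix code of quadratic relations associated with the ordered family `v`. -/
def Cmat {F : Type*} [Field F] {n : ℕ} {ι : Type*} [Fintype ι] [LinearOrder ι]
    (v : ι → Fin n → F) : Set (Matrix ι ι F) :=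
  { M | ∃ c : ι → ι → F,
      (∑ i : ι, ∑ j : ι, (if i ≤ j then c i j • schur (v i) (v j) else 0)) = 0 ∧
      (∀ i j : ι, i < j → M i j = c i j ∧ M j i = c i j) ∧
      (∀ i : ι, M i i = 2 * c i i) }

/-- Linear order on the index pairs `(j,i)` of the canonical family. -/
noncomputable instance pairLO (m r : ℕ) : LinearOrder (Fin m × Fin r) :=
  LinearOrder.lift' (fun p => finProdFinEquiv p) finProdFinEquiv.injective

/-!
In characteristic `2` the relation `a_{(0,0)} ⋆ a_{(0,2k)} = a_{(0,k)} ⋆ a_{(0,k)}` of the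
canonical family has matrix `E_{(0,0),(0,2k)} + E_{(0,2k),(0,0)}`: the diagonal entry `2 c`
of the square term vanishes. For `1 ≤ k ≤ ⌊(r-1)/2⌋` these matrices are linearly independent
(read off row `(0,0)`), and each of their combinations is `e bᵀ + b eᵀ` with `e` the unit
vector at `(0,0)`, hence has rank at most `2`.
-/

open Submodule Function

theorem two_eq_zero_of_card_eq_two_pow {F : Type*} [Field F] [Fintype F] {n : ℕ}
    (h : Fintype.card F = 2 ^ n) : (2 : F) = 0 :=
  eq_zero_of_pow_eq_zero (n := n) (by exact_mod_cast h ▸ FiniteField.cast_card_eq_zero F)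

section Relations

variable {F : Type*} [Field F] {n : ℕ}

theorem schur_comm (a b : Fin n → F) : schur a b = schur b a :=
  funext fun _ => mul_comm _ _

variable {ι : Type*} [Fintype ι] [LinearOrder ι]

/-- The kernel of this map, read on the upper triangle of `c`, is `C_rel(v)`. -/
def quadRelationMap (v : ι → Fin n → F) : Matrix ι ι F →ₗ[F] Fin n → F where
  toFun c := ∑ i, ∑ j, if i ≤ j then c i j • schur (v i) (v j) else 0
  map_add' c d := by
    simp only [Matrix.add_apply, add_smul, ite_add_zero, Finset.sum_add_distrib]
  map_smul' a c := by
    simp only [Matrix.smul_apply, smul_eq_mul, mul_smul, Finset.smul_sum, smul_ite, smul_zero,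
      RingHom.id_apply]

theorem quadRelationMap_single [DecidableEq ι] (v : ι → Fin n → F) {p t : ι} (hpt : p ≤ t)
    (a : F) :
    quadRelationMap v (single p t a) = a • schur (v p) (v t) := by
  change ∑ i, ∑ j, _ = _
  rw [Fintype.sum_eq_single p fun i hi => Finset.sum_eq_zero fun j _ => by
      simp [Ne.symm hi],
    Fintype.sum_eq_single t fun j hj => by simp [Ne.symm hj]]
  simp [hpt]

theorem mem_Cmat_iff {v : ι → Fin n → F} {M : Matrix ι ι F} :
    M ∈ Cmat v ↔ ∃ c : Matrix ι ι F, quadRelationMap v c = 0 ∧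
      (∀ i j, i < j → M i j = c i j ∧ M j i = c i j) ∧ ∀ i, M i i = 2 * c i i :=
  Iff.rfl

def cmatSubmodule (v : ι → Fin n → F) : Submodule F (Matrix ι ι F) where
  carrier := Cmat v
  zero_mem' := mem_Cmat_iff.2 ⟨0, map_zero _, by simp, by simp⟩
  add_mem' := by
    intro M N hM hN
    obtain ⟨c, hc, hoff, hdiag⟩ := mem_Cmat_iff.1 hM
    obtain ⟨d, hd, hoff', hdiag'⟩ := mem_Cmat_iff.1 hN
    refine mem_Cmat_iff.2 ⟨c + d, ?_, fun i j hij => ?_, fun i => ?_⟩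
    · rw [map_add, hc, hd, add_zero]
    · simp [hoff i j hij, hoff' i j hij]
    · simp [hdiag, hdiag', mul_add]
  smul_mem' := by
    intro a M hM
    obtain ⟨c, hc, hoff, hdiag⟩ := mem_Cmat_iff.1 hM
    refine mem_Cmat_iff.2 ⟨a • c, ?_, fun i j hij => ?_, fun i => ?_⟩
    · rw [map_smul, hc, smul_zero]
    · simp [hoff i j hij]
    · simp [hdiag, mul_left_comm]

/-- This is `M_c` for the relation `v p ⋆ v t - v s ⋆ v s = 0`, whose diagonal entry is
`2 c_{s,s}`. -/
theorem single_add_single_sub_single_mem_Cmat [DecidableEq ι] {v : ι → Fin n → F} {p t s : ι}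
    (hpt : p ≠ t) (hrel : schur (v p) (v t) = schur (v s) (v s)) :
    single p t 1 + single t p 1 - single s s 2 ∈ Cmat v := by
  wlog hlt : p < t generalizing p t
  · rw [add_comm]
    exact this hpt.symm (by rwa [schur_comm]) (hpt.lt_or_gt.resolve_left hlt)
  refine mem_Cmat_iff.2 ⟨single p t 1 - single s s 1, ?_, fun i j hij => ?_, fun i => ?_⟩
  · rw [map_sub, quadRelationMap_single v hlt.le, quadRelationMap_single v le_rfl, one_smul,
      one_smul, hrel, sub_self]
  · have hji : p = j → t ≠ i := fun hpj hti => (hti ▸ hpj ▸ hlt).asymm hij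
    have hss : ¬(s = i ∧ s = j) := fun ⟨hsi, hsj⟩ => hij.ne (hsi.symm.trans hsj)
    simpa [single_apply, hss, and_comm] using hji
  · have hpti : ¬(p = i ∧ t = i) := fun h => hpt (h.1.trans h.2.symm)
    have htpi : ¬(t = i ∧ p = i) := fun h => hpti h.symm
    by_cases hs : s = i <;> simp [hpti, htpi, hs]

theorem single_add_single_mem_Cmat_of_two_eq_zero [DecidableEq ι] (h2 : (2 : F) = 0)
    {v : ι → Fin n → F} {p t s : ι} (hpt : p ≠ t)
    (hrel : schur (v p) (v t) = schur (v s) (v s)) :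
    single p t 1 + single t p 1 ∈ Cmat v := by
  simpa [h2] using single_add_single_sub_single_mem_Cmat hpt hrel

end Relations

section Rank

variable {K : Type*} [Field K] {ι : Type*}

theorem Matrix.rank_add_le {m : Type*} [Fintype ι] (A B : Matrix m ι K) :
    (A + B).rank ≤ A.rank + B.rank := by
  rw [Matrix.rank, Matrix.rank, Matrix.rank, mulVecLin_add]
  exact (finrank_mono (LinearMap.range_add_le _ _)).trans (finrank_add_le_finrank_add_finrank _ _)

theorem rank_vecMulVec_add_vecMulVec_le [Fintype ι] (a b c d : ι → K) :
    (vecMulVec a b + vecMulVec c d).rank ≤ 2 :=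
  (rank_add_le _ _).trans (add_le_add (rank_vecMulVec_le a b) (rank_vecMulVec_le c d))

theorem rank_le_two_of_mem_span_single_add_single [Fintype ι] [DecidableEq ι] {κ : Type*}
    (p : ι) (t : κ → ι) {M : Matrix ι ι K}
    (hM : M ∈ span K (Set.range fun k => single p (t k) 1 + single (t k) p 1)) :
    M.rank ≤ 2 := by
  let e : ι → K := Pi.single p 1
  let S : (ι → K) →ₗ[K] Matrix ι ι K := vecMulVecBilin K K e + (vecMulVecBilin K K).flip e
  have hspan :
      span K (Set.range fun k => single p (t k) 1 + single (t k) p 1) ≤ LinearMap.range S :=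
    span_le.2 <| by
      rintro _ ⟨k, rfl⟩
      exact ⟨Pi.single (t k) 1, by simp [S, e, single_eq_single_vecMulVec_single]⟩
  obtain ⟨b, rfl⟩ := hspan hM
  exact rank_vecMulVec_add_vecMulVec_le _ _ _ _

theorem linearIndependent_single_add_single [DecidableEq ι] {κ : Type*} {p : ι} {t : κ → ι}
    (ht : Injective t) (hp : ∀ k, t k ≠ p) :
    LinearIndependent K fun k => single p (t k) (1 : K) + single (t k) p 1 := by
  classical
  let l : Matrix ι ι K →ₗ[K] κ → K := LinearMap.pi fun k => entryLinearMap K K p (t k)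
  refine LinearIndependent.of_comp l ?_
  convert Pi.linearIndependent_single_one κ K using 1
  ext k k'
  simp [l, single_apply, Pi.single_apply, ht.eq_iff, hp, eq_comm]

end Rank

def canonicalFamily {F : Type*} [Field F] {n m r : ℕ} (q : ℕ) (x y : Fin n → F) :
    Fin m × Fin r → Fin n → F :=
  fun p t => (x t ^ (p.2 : ℕ) * y t) ^ q ^ (p.1 : ℕ)

theorem schur_canonicalFamily_eq_of_add_eq {F : Type*} [Field F] {n m r : ℕ} (q : ℕ)
    (x y : Fin n → F) (l : Fin m) {i i' j j' : Fin r} (h : (i : ℕ) + i' = j + j') :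
    schur (canonicalFamily q x y (l, i)) (canonicalFamily q x y (l, i')) =
      schur (canonicalFamily q x y (l, j)) (canonicalFamily q x y (l, j')) := by
  funext τ
  simp only [schur, canonicalFamily, ← mul_pow]
  rw [mul_mul_mul_comm, ← pow_add, h, pow_add, mul_mul_mul_comm]

theorem cmat_rank_two_subspace_char_two_general
    (q m r nn : ℕ) (hq : ∃ e : ℕ, 0 < e ∧ q = 2 ^ e)
    (hm : 0 < m) (hr : 2 ≤ r)
    (F : Type*) [Field F] [Fintype F] (hF : Fintype.card F = q ^ m)
    (x y : Fin nn → F)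
    (A : Fin m × Fin r → Fin nn → F)
    (hA : A = fun p t => (x t ^ (p.2 : ℕ) * y t) ^ q ^ (p.1 : ℕ)) :
    ∃ W : Submodule F (Matrix (Fin m × Fin r) (Fin m × Fin r) F),
      (W : Set (Matrix (Fin m × Fin r) (Fin m × Fin r) F)) ⊆ Cmat A ∧
      Module.finrank F W = (r - 1) / 2 ∧
      ∀ M ∈ W, M.rank ≤ 2 := by
  obtain ⟨e, -, rfl⟩ := hq
  have h2 : (2 : F) = 0 := two_eq_zero_of_card_eq_two_pow (by rw [hF, ← pow_mul])
  obtain rfl : A = canonicalFamily (2 ^ e) x y := hA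
  -- `a_{(0,0)} ⋆ a_{(0,2k)} = a_{(0,k)} ⋆ a_{(0,k)}` for `1 ≤ k ≤ (r - 1) / 2`
  let p : Fin m × Fin r := (⟨0, hm⟩, ⟨0, by omega⟩)
  let t (k : Fin ((r - 1) / 2)) : Fin m × Fin r := (⟨0, hm⟩, ⟨2 * (k + 1), by omega⟩)
  let s (k : Fin ((r - 1) / 2)) : Fin m × Fin r := (⟨0, hm⟩, ⟨k + 1, by omega⟩)
  have htp (k) : t k ≠ p := by simp [t, p]
  have ht : Injective t := fun k k' h => by simp [t] at h; omega
  refine ⟨span F (Set.range fun k => single p (t k) 1 + single (t k) p 1), ?_, ?_,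
    fun M hM => rank_le_two_of_mem_span_single_add_single p t hM⟩
  · have hgen : Set.range (fun k => single p (t k) 1 + single (t k) p 1) ⊆
        Cmat (canonicalFamily (2 ^ e) x y) := by
      rintro _ ⟨k, rfl⟩
      exact single_add_single_mem_Cmat_of_two_eq_zero h2 (htp k).symm (s := s k)
        (schur_canonicalFamily_eq_of_add_eq (2 ^ e) x y _ (by simp; ring))
    exact fun M hM => span_le (p := cmatSubmodule _) |>.2 hgen hM
  · rw [finrank_span_eq_card (linearIndependent_single_add_single ht htp), Fintype.card_fin]

/-- Let `q` be a power of `2`, `r ≥ 2`, `F` a field with `q^m` elements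
and `A` the canonical family `a_{(j,i)} = (x^i y)^{q^j}` (assumed linearly independent).
Then `C_mat(A)` contains an `F`-linear subspace `W` of dimension `⌊(r−1)/2⌋` all of whose
elements have rank at most `2`. -/
theorem cmat_rank_two_subspace_char_two
    (q m r nn : ℕ) (hq : ∃ e : ℕ, 0 < e ∧ q = 2 ^ e)
    (hm : 0 < m) (hr : 2 ≤ r) (hn : 0 < nn)
    (F : Type*) [Field F] [Fintype F] (hF : Fintype.card F = q ^ m)
    (x y : Fin nn → F) (hx : Function.Injective x) (hy : ∀ t, y t ≠ 0)
    (A : Fin m × Fin r → Fin nn → F)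
    (hA : A = fun p t => (x t ^ (p.2 : ℕ) * y t) ^ q ^ (p.1 : ℕ))
    (hAind : LinearIndependent F A) :
    ∃ W : Submodule F (Matrix (Fin m × Fin r) (Fin m × Fin r) F),
      (W : Set (Matrix (Fin m × Fin r) (Fin m × Fin r) F)) ⊆ Cmat A ∧
      Module.finrank F W = (r - 1) / 2 ∧
      ∀ M ∈ W, M.rank ≤ 2 :=
  cmat_rank_two_subspace_char_two_general q m r nn hq hm hr F hF x y A hA
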